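/- arXiv:1303.2457 — 6 statements merged into one kernel-verified Lean document; each statement's English description precedes it below -/
import Mathlib

section
/- Let P be a complex homogeneous polynomial of degree d and S = {L_1,...,L_r} a set of pairwise non-proportional complex linear forms such that P lies in the complex span of {L_1^d,...,L_r^d} and r = r_ℂ(P). Then for every proper subset E ⊊ S, the intersection of the span of {P} ∪ {L^d : L ∈ E} with the span of {L^d : L ∈ S \ E} is a single point P_1 (a one-dimensional subspace), and the set S \ E computes the complex symmetric rank of P_1, i.e. r_ℂ(P_1) = r - #E. -/
/-!
Minimality of `S` forces the powers `L ^ d`, `L ∈ S`, to be linearly independent, so the span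
of `S ^ d` is the direct sum of the spans of `E ^ d` and `(S \ E) ^ d`. Splitting `P = P₁ + Q`
along this sum, the modular law identifies the intersection with `ℂ ∙ P₁`. Since `P₁` lies in the
span of `(S \ E) ^ d`, its rank is at most `r - #E`; it is at least `r - #E` because rank is
subadditive and `Q` has rank at most `#E`.
-/

open MvPolynomial

/-- The complex symmetric rank of `P` with respect to degree `d`. -/
noncomputable def cRank {n : ℕ} (d : ℕ) (P : MvPolynomial (Fin n) ℂ) : ℕ :=
  sInf {r : ℕ | ∃ (c : Fin r → ℂ) (L : Fin r → MvPolynomial (Fin n) ℂ),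
    (∀ i, c i ≠ 0) ∧ (∀ i, (L i).IsHomogeneous 1) ∧ P = ∑ i, c i • L i ^ d}

namespace Submodule

variable {R M : Type*} [Ring R] [AddCommGroup M] [Module R M]

theorem span_singleton_add_sup {A : Submodule R M} (x : M) {y : M} (hy : y ∈ A) :
    span R {x + y} ⊔ A = span R {x} ⊔ A := by
  apply le_antisymm <;> rw [sup_le_iff, span_singleton_le_iff_mem] <;> refine ⟨?_, le_sup_right⟩
  · exact add_mem_sup (mem_span_singleton_self x) hy
  · simpa using sub_mem_sup (mem_span_singleton_self (x + y)) hy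

theorem span_singleton_add_sup_inf_of_disjoint {A B : Submodule R M} (hAB : Disjoint A B)
    {x y : M} (hx : x ∈ B) (hy : y ∈ A) :
    (span R {x + y} ⊔ A) ⊓ B = span R {x} := by
  rw [span_singleton_add_sup x hy, sup_inf_assoc_of_le _ ((span_singleton_le_iff_mem _ _).2 hx),
    hAB.eq_bot, sup_bot_eq]

end Submodule

open Finset Submodule

section WaringRank

variable {n d : ℕ} {P Q : MvPolynomial (Fin n) ℂ}

theorem exists_waring_decomp_of_mem_span {T : Finset (MvPolynomial (Fin n) ℂ)}
    (hT : ∀ L ∈ T, L.IsHomogeneous 1) (hP : P ∈ span ℂ ((· ^ d) '' (T : Set _))) :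
    ∃ r ≤ T.card, ∃ (c : Fin r → ℂ) (L : Fin r → MvPolynomial (Fin n) ℂ),
      (∀ i, c i ≠ 0) ∧ (∀ i, (L i).IsHomogeneous 1) ∧ P = ∑ i, c i • L i ^ d := by
  obtain ⟨l, hl, rfl⟩ := (Finsupp.mem_span_image_iff_linearCombination ℂ).mp hP
  have hlT : l.support ⊆ T := by simpa [Finsupp.mem_supported] using hl
  set e := l.support.equivFin
  refine ⟨l.support.card, card_le_card hlT, fun i => l (e.symm i), fun i => e.symm i,
    fun i => Finsupp.mem_support_iff.mp (e.symm i).2, fun i => hT _ (hlT (e.symm i).2), ?_⟩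
  rw [Finsupp.linearCombination_apply, Finsupp.sum, ← sum_coe_sort, ← e.symm.sum_comp]

theorem sum_smul_pow_mem_span_image {r : ℕ} (c : Fin r → ℂ)
    (L : Fin r → MvPolynomial (Fin n) ℂ) :
    ∑ i, c i • L i ^ d ∈ span ℂ ((· ^ d) '' ((univ.image L : Finset _) : Set _)) :=
  sum_mem fun i _ => smul_mem _ _ (subset_span ⟨L i, by simp, rfl⟩)

theorem cRank_le_card_of_mem_span {T : Finset (MvPolynomial (Fin n) ℂ)}
    (hT : ∀ L ∈ T, L.IsHomogeneous 1) (hP : P ∈ span ℂ ((· ^ d) '' (T : Set _))) :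
    cRank d P ≤ T.card := by
  obtain ⟨r, hr, hdecomp⟩ := exists_waring_decomp_of_mem_span hT hP
  have hrank : cRank d P ≤ r := Nat.sInf_le hdecomp
  exact hrank.trans hr

theorem exists_waring_decomp_cRank
    (h : ∃ r, ∃ (c : Fin r → ℂ) (L : Fin r → MvPolynomial (Fin n) ℂ),
      (∀ i, c i ≠ 0) ∧ (∀ i, (L i).IsHomogeneous 1) ∧ P = ∑ i, c i • L i ^ d) :
    ∃ (c : Fin (cRank d P) → ℂ) (L : Fin (cRank d P) → MvPolynomial (Fin n) ℂ),
      (∀ i, c i ≠ 0) ∧ (∀ i, (L i).IsHomogeneous 1) ∧ P = ∑ i, c i • L i ^ d :=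
  Nat.sInf_mem h

theorem exists_finset_card_eq_cRank {T : Finset (MvPolynomial (Fin n) ℂ)}
    (hT : ∀ L ∈ T, L.IsHomogeneous 1) (hP : P ∈ span ℂ ((· ^ d) '' (T : Set _))) :
    ∃ U : Finset (MvPolynomial (Fin n) ℂ), (∀ L ∈ U, L.IsHomogeneous 1) ∧
      P ∈ span ℂ ((· ^ d) '' (U : Set _)) ∧ U.card = cRank d P := by
  obtain ⟨r, -, hr⟩ := exists_waring_decomp_of_mem_span hT hP
  obtain ⟨c, L, -, hL, hsum⟩ := exists_waring_decomp_cRank ⟨r, hr⟩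
  have hU : ∀ M ∈ univ.image L, M.IsHomogeneous 1 := by simpa using hL
  have hPU : P ∈ span ℂ ((· ^ d) '' ((univ.image L : Finset _) : Set _)) := by
    convert sum_smul_pow_mem_span_image c L
  refine ⟨univ.image L, hU, hPU, le_antisymm ?_ (cRank_le_card_of_mem_span hU hPU)⟩
  exact card_image_le.trans (by simp)

theorem cRank_zero : cRank d (0 : MvPolynomial (Fin n) ℂ) = 0 :=
  Nat.sInf_eq_zero.2 (Or.inl ⟨![], ![], fun i => i.elim0, fun i => i.elim0, by simp⟩)

-- The span hypotheses exclude the junk value `cRank d P = sInf ∅ = 0`.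
theorem cRank_add_le {T U : Finset (MvPolynomial (Fin n) ℂ)}
    (hT : ∀ L ∈ T, L.IsHomogeneous 1) (hU : ∀ L ∈ U, L.IsHomogeneous 1)
    (hP : P ∈ span ℂ ((· ^ d) '' (T : Set _))) (hQ : Q ∈ span ℂ ((· ^ d) '' (U : Set _))) :
    cRank d (P + Q) ≤ cRank d P + cRank d Q := by
  obtain ⟨T', hT', hPT', hcardT'⟩ := exists_finset_card_eq_cRank hT hP
  obtain ⟨U', hU', hQU', hcardU'⟩ := exists_finset_card_eq_cRank hU hQ
  have hunion : ∀ L ∈ T' ∪ U', L.IsHomogeneous 1 := by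
    simpa [or_imp, forall_and] using ⟨hT', hU'⟩
  have hPQ : P + Q ∈ span ℂ ((· ^ d) '' ((T' ∪ U' : Finset _) : Set _)) := by
    rw [coe_union, Set.image_union, span_union]
    exact add_mem_sup hPT' hQU'
  calc cRank d (P + Q) ≤ (T' ∪ U').card := cRank_le_card_of_mem_span hunion hPQ
    _ ≤ T'.card + U'.card := card_union_le _ _
    _ = cRank d P + cRank d Q := by rw [hcardT', hcardU']

theorem linearIndepOn_pow_of_card_eq_cRank {T : Finset (MvPolynomial (Fin n) ℂ)}
    (hT : ∀ L ∈ T, L.IsHomogeneous 1) (hP : P ∈ span ℂ ((· ^ d) '' (T : Set _)))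
    (hcard : T.card = cRank d P) :
    LinearIndepOn ℂ (· ^ d) (T : Set (MvPolynomial (Fin n) ℂ)) := by
  rw [linearIndepOn_iff_notMem_span]
  intro L hL hLspan
  have hPerase : P ∈ span ℂ ((· ^ d) '' ((T.erase L : Finset _) : Set _)) := by
    refine span_le.2 ?_ hP
    rintro _ ⟨M, hM, rfl⟩
    by_cases hML : M = L
    · subst hML
      simpa [coe_erase] using hLspan
    · exact subset_span ⟨M, by simp [hML, hM], rfl⟩
  have hle := cRank_le_card_of_mem_span (fun M hM => hT M (mem_of_mem_erase hM)) hPerase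
  rw [card_erase_of_mem hL] at hle
  have hpos := card_pos.2 ⟨L, hL⟩
  omega

end WaringRank

theorem rank_of_partial_point_general {m d : ℕ} (P : MvPolynomial (Fin (m + 1)) ℂ)
    (S : Finset (MvPolynomial (Fin (m + 1)) ℂ))
    (hS1 : ∀ L ∈ S, L.IsHomogeneous 1)
    (hPS : P ∈ Submodule.span ℂ ((fun L => L ^ d) '' (S : Set _)))
    (hcard : S.card = cRank d P)
    (E : Finset (MvPolynomial (Fin (m + 1)) ℂ)) (hES : E ⊆ S) (hEne : E ≠ S) :
    ∃ P₁ : MvPolynomial (Fin (m + 1)) ℂ, P₁ ≠ 0 ∧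
      Submodule.span ℂ ({P} ∪ (fun L => L ^ d) '' (E : Set _)) ⊓
          Submodule.span ℂ ((fun L => L ^ d) '' ((S \ E : Finset _) : Set _)) =
        Submodule.span ℂ {P₁} ∧
      cRank d P₁ = S.card - E.card := by
  have hind := linearIndepOn_pow_of_card_eq_cRank hS1 hPS hcard
  have hSE : ∀ L ∈ S \ E, L.IsHomogeneous 1 := fun L hL => hS1 L (mem_sdiff.1 hL).1
  have hE : ∀ L ∈ E, L.IsHomogeneous 1 := fun L hL => hS1 L (hES hL)
  have hsplit : (S : Set (MvPolynomial (Fin (m + 1)) ℂ)) = ↑(S \ E) ∪ ↑E := by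
    rw [← coe_union, sdiff_union_of_subset hES]
  rw [hsplit, Set.image_union, span_union] at hPS
  obtain ⟨P₁, hP₁, Q, hQ, rfl⟩ := mem_sup.1 hPS
  have hrank : cRank d P₁ = S.card - E.card := by
    have hsub := cRank_add_le hSE hE hP₁ hQ
    have hQE := cRank_le_card_of_mem_span hE hQ
    have hP₁SE := cRank_le_card_of_mem_span hSE hP₁
    rw [card_sdiff_of_subset hES] at hP₁SE
    omega
  refine ⟨P₁, ?_, ?_, hrank⟩
  · rintro rfl
    have hEcard := card_lt_card (ssubset_of_subset_of_ne hES hEne)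
    rw [cRank_zero] at hrank
    omega
  · rw [hsplit, linearIndepOn_union_iff (disjoint_coe.2 sdiff_disjoint)] at hind
    rw [Set.singleton_union, span_insert]
    exact span_singleton_add_sup_inf_of_disjoint hind.2.2.symm hP₁ hQ

/-- If `S` is a set of pairwise non-proportional linear forms evincing the complex rank of `P`,
then for every proper subset `E ⊊ S` the intersection of the span of `{P} ∪ {L^d : L ∈ E}`
with the span of `{L^d : L ∈ S \ E}` is a single (projective) point `P₁`, and `S \ E`
evinces the complex rank of `P₁`: `r_ℂ(P₁) = r - #E`. -/
theorem rank_of_partial_point {m d : ℕ} (P : MvPolynomial (Fin (m + 1)) ℂ)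
    (hP : P.IsHomogeneous d)
    (S : Finset (MvPolynomial (Fin (m + 1)) ℂ))
    (hS1 : ∀ L ∈ S, L.IsHomogeneous 1)
    (hSprop : ∀ L ∈ S, ∀ L' ∈ S, L ≠ L' → ∀ a : ℂ, L ≠ a • L')
    (hPS : P ∈ Submodule.span ℂ ((fun L => L ^ d) '' (S : Set _)))
    (hcard : S.card = cRank d P)
    (E : Finset (MvPolynomial (Fin (m + 1)) ℂ)) (hES : E ⊆ S) (hEne : E ≠ S) :
    ∃ P₁ : MvPolynomial (Fin (m + 1)) ℂ, P₁ ≠ 0 ∧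
      Submodule.span ℂ ({P} ∪ (fun L => L ^ d) '' (E : Set _)) ⊓
          Submodule.span ℂ ((fun L => L ^ d) '' ((S \ E : Finset _) : Set _)) =
        Submodule.span ℂ {P₁} ∧
      cRank d P₁ = S.card - E.card :=
  rank_of_partial_point_general P S hS1 hPS hcard E hES hEne
end

section
/- Let S = {L_1, ..., L_r} be a set of pairwise non-proportional real linear forms evincing the real symmetric rank of a real homogeneous polynomial P of degree d, and let E ⊊ S be a proper subset. Write P = Q + R where Q is in the real span of {L^d : L ∈ E} and R in the real span of {L^d : L ∈ S \ E}. Then S \ E evinces the real symmetric rank of R, i.e. r_ℝ(R) = r - #E. -/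
/-!
Writing `R` as a combination of the `d`-th powers of `S \ E` gives `r_ℝ(R) ≤ #S - #E`.
Conversely, gluing a minimal decomposition of `R` to the decomposition of `Q` through `E`
decomposes `P` with `#E + r_ℝ(R)` powers, and this is at least `r_ℝ(P) = #S`:
the real rank is subadditive on the span of powers of linear forms.
-/

open MvPolynomial

/-- The real symmetric rank of `P` with respect to degree `d`. -/
noncomputable def rRank {n : ℕ} (d : ℕ) (P : MvPolynomial (Fin n) ℝ) : ℕ :=
  sInf {r : ℕ | ∃ (c : Fin r → ℝ) (L : Fin r → MvPolynomial (Fin n) ℝ),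
    (∀ i, c i ≠ 0) ∧ (∀ i, (L i).IsHomogeneous 1) ∧ P = ∑ i, c i • L i ^ d}

section RealRank

variable {n d : ℕ} {X Y : MvPolynomial (Fin n) ℝ}

def rRankSet (d : ℕ) (X : MvPolynomial (Fin n) ℝ) : Set ℕ :=
  {r : ℕ | ∃ (c : Fin r → ℝ) (L : Fin r → MvPolynomial (Fin n) ℝ),
    (∀ i, c i ≠ 0) ∧ (∀ i, (L i).IsHomogeneous 1) ∧ X = ∑ i, c i • L i ^ d}

noncomputable def waringSpan (n d : ℕ) : Submodule ℝ (MvPolynomial (Fin n) ℝ) :=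
  Submodule.span ℝ ((fun L => L ^ d) '' {L | L.IsHomogeneous 1})

/-- Discarding the zero coefficients of a decomposition gives an admissible one. -/
theorem exists_mem_rRankSet_le {ι : Type*} [Fintype ι] (c : ι → ℝ)
    (L : ι → MvPolynomial (Fin n) ℝ) (hL : ∀ i, (L i).IsHomogeneous 1)
    (hX : X = ∑ i, c i • L i ^ d) :
    ∃ r ≤ Fintype.card ι, r ∈ rRankSet d X := by
  classical
  set s := Finset.univ.filter fun i => c i ≠ 0
  have hXs : X = ∑ i : s, c i • L i ^ d := by
    rw [Finset.sum_coe_sort s fun i => c i • L i ^ d, Finset.sum_filter_of_ne, hX]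
    rintro i - hi hc
    exact hi (by rw [hc, zero_smul])
  refine ⟨s.card, Finset.card_le_univ s,
    fun i => c (s.equivFin.symm i), fun i => L (s.equivFin.symm i),
    fun i => (Finset.mem_filter.mp (s.equivFin.symm i).2).2, fun i => hL _, ?_⟩
  rw [hXs]
  exact (Equiv.sum_comp s.equivFin.symm fun i : s => c i • L i ^ d).symm

theorem rRank_le_of_eq_sum {ι : Type*} [Fintype ι] (c : ι → ℝ)
    (L : ι → MvPolynomial (Fin n) ℝ) (hL : ∀ i, (L i).IsHomogeneous 1)
    (hX : X = ∑ i, c i • L i ^ d) :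
    rRank d X ≤ Fintype.card ι := by
  obtain ⟨r, hr, hmem⟩ := exists_mem_rRankSet_le c L hL hX
  exact (Nat.sInf_le hmem).trans hr

theorem rRank_le_card_of_mem_span {T : Finset (MvPolynomial (Fin n) ℝ)}
    (hT : ∀ L ∈ T, L.IsHomogeneous 1)
    (hX : X ∈ Submodule.span ℝ ((fun L => L ^ d) '' (T : Set _))) :
    rRank d X ≤ T.card := by
  obtain ⟨t, htT, c, hc⟩ := Submodule.mem_span_image_iff_exists_fun ℝ |>.mp hX
  calc rRank d X ≤ Fintype.card t :=
        rRank_le_of_eq_sum c (fun L => L) (fun L => hT L (htT L.2)) hc.symm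
    _ = t.card := Fintype.card_coe t
    _ ≤ T.card := Finset.card_le_card (by exact_mod_cast htT)

theorem span_image_pow_le_waringSpan {T : Set (MvPolynomial (Fin n) ℝ)}
    (hT : ∀ L ∈ T, L.IsHomogeneous 1) :
    Submodule.span ℝ ((fun L => L ^ d) '' T) ≤ waringSpan n d :=
  Submodule.span_mono (Set.image_mono hT)

theorem exists_eq_sum_rRank (hX : X ∈ waringSpan n d) :
    ∃ (c : Fin (rRank d X) → ℝ) (L : Fin (rRank d X) → MvPolynomial (Fin n) ℝ),
      (∀ i, (L i).IsHomogeneous 1) ∧ X = ∑ i, c i • L i ^ d := by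
  obtain ⟨t, ht, c, hc⟩ := (Submodule.mem_span_image_iff_exists_fun ℝ).mp hX
  have hL : ∀ L : t, (L : MvPolynomial (Fin n) ℝ).IsHomogeneous 1 := fun L => ht L.2
  have hX' : X = ∑ L : t, c L • (L : MvPolynomial (Fin n) ℝ) ^ d := hc.symm
  obtain ⟨r, -, hr⟩ := exists_mem_rRankSet_le c (fun L : t => (L : MvPolynomial (Fin n) ℝ)) hL hX'
  obtain ⟨c', L', -, hL', hX'⟩ : rRank d X ∈ rRankSet d X := Nat.sInf_mem ⟨r, hr⟩
  exact ⟨c', L', hL', hX'⟩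

theorem rRank_add_le (hX : X ∈ waringSpan n d) (hY : Y ∈ waringSpan n d) :
    rRank d (X + Y) ≤ rRank d X + rRank d Y := by
  obtain ⟨a, L, hL, hX'⟩ := exists_eq_sum_rRank hX
  obtain ⟨b, M, hM, hY'⟩ := exists_eq_sum_rRank hY
  have hsum : X + Y = ∑ i, Sum.elim a b i • Sum.elim L M i ^ d := by
    rw [Fintype.sum_sum_type]
    simp only [Sum.elim_inl, Sum.elim_inr]
    rw [← hX', ← hY']
  calc rRank d (X + Y) ≤ Fintype.card (Fin _ ⊕ Fin _) :=
        rRank_le_of_eq_sum _ _ (Sum.forall.mpr ⟨hL, hM⟩) hsum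
    _ = _ := by rw [Fintype.card_sum, Fintype.card_fin, Fintype.card_fin]

end RealRank

theorem real_rank_of_partial_point_general {m d : ℕ} (P Q R : MvPolynomial (Fin (m + 1)) ℝ)
    (S : Finset (MvPolynomial (Fin (m + 1)) ℝ))
    (hS1 : ∀ L ∈ S, L.IsHomogeneous 1)
    (hcard : S.card = rRank d P)
    (E : Finset (MvPolynomial (Fin (m + 1)) ℝ)) (hES : E ⊆ S)
    (hQ : Q ∈ Submodule.span ℝ ((fun L => L ^ d) '' (E : Set _)))
    (hR : R ∈ Submodule.span ℝ ((fun L => L ^ d) '' ((S \ E : Finset _) : Set _)))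
    (hQR : P = Q + R) :
    rRank d R = S.card - E.card := by
  have hE1 : ∀ L ∈ E, L.IsHomogeneous 1 := fun L hL => hS1 L (hES hL)
  have hSE1 : ∀ L ∈ S \ E, L.IsHomogeneous 1 := fun L hL => hS1 L (Finset.sdiff_subset hL)
  have hupper : rRank d R ≤ (S \ E).card := rRank_le_card_of_mem_span hSE1 hR
  have hlower : S.card ≤ E.card + rRank d R :=
    calc S.card = rRank d (Q + R) := hQR ▸ hcard
      _ ≤ rRank d Q + rRank d R := rRank_add_le (span_image_pow_le_waringSpan hE1 hQ)
          (span_image_pow_le_waringSpan hSE1 hR)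
      _ ≤ E.card + rRank d R := Nat.add_le_add_right (rRank_le_card_of_mem_span hE1 hQ) _
  rw [Finset.card_sdiff_of_subset hES] at hupper
  omega

/-- If `S` is a set of pairwise non-proportional real linear forms evincing the real rank of
`P`, `E ⊊ S`, and `P = Q + R` with `Q` in the real span of `{L^d : L ∈ E}` and `R` in the
real span of `{L^d : L ∈ S \ E}`, then `S \ E` evinces the real rank of `R`:
`r_ℝ(R) = r - #E`. -/
theorem real_rank_of_partial_point {m d : ℕ} (P Q R : MvPolynomial (Fin (m + 1)) ℝ)
    (hP : P.IsHomogeneous d)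
    (S : Finset (MvPolynomial (Fin (m + 1)) ℝ))
    (hS1 : ∀ L ∈ S, L.IsHomogeneous 1)
    (hSprop : ∀ L ∈ S, ∀ L' ∈ S, L ≠ L' → ∀ a : ℝ, L ≠ a • L')
    (hPS : P ∈ Submodule.span ℝ ((fun L => L ^ d) '' (S : Set _)))
    (hcard : S.card = rRank d P)
    (E : Finset (MvPolynomial (Fin (m + 1)) ℝ)) (hES : E ⊆ S) (hEne : E ≠ S)
    (hQ : Q ∈ Submodule.span ℝ ((fun L => L ^ d) '' (E : Set _)))
    (hR : R ∈ Submodule.span ℝ ((fun L => L ^ d) '' ((S \ E : Finset _) : Set _)))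
    (hQR : P = Q + R) :
    rRank d R = S.card - E.card :=
  real_rank_of_partial_point_general P Q R S hS1 hcard E hES hQ hR hQR
end

section
/- Let A and B be finite subsets of ℙ^m and d a positive integer. Suppose P is a point lying in the span of ν_d(A) and in the span of ν_d(B), but not in the span of ν_d(S') for any proper subset S' of A nor any proper subset S' of B. If A ≠ B, then h^1(ℐ_{A∪B}(d)) > 0; equivalently, the points of ν_d(A ∪ B) are linearly dependent, i.e., the points of A ∪ B do not impose independent conditions on degree-d forms. -/
open MvPolynomial

/-- The linear form with coefficient vector `v`. -/
noncomputable def linForm {n : ℕ} (v : Fin n → ℂ) : MvPolynomial (Fin n) ℂ :=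
  ∑ i, C (v i) * X i

/-- The affine cone version of the degree-`d` Veronese embedding: a projective point `p`
is sent to the `d`-th power of the corresponding linear form (on a representative). -/
noncomputable def nu {n : ℕ} (d : ℕ) (p : Projectivization ℂ (Fin n → ℂ)) :
    MvPolynomial (Fin n) ℂ :=
  linForm p.rep ^ d

set_option maxHeartbeats 2000000 in
/-- If a point `P` lies in the spans of `ν_d(A)` and of `ν_d(B)` but in no span of a proper
subset of either, and `A ≠ B`, then the points of `ν_d(A ∪ B)` are linearly dependent
(`h¹(𝓘_{A∪B}(d)) > 0`). -/
theorem dependence_of_two_evincing_sets {m d : ℕ}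
    (A B : Finset (Projectivization ℂ (Fin (m + 1) → ℂ)))
    (P : MvPolynomial (Fin (m + 1)) ℂ) (hP : P ≠ 0)
    (hA : P ∈ Submodule.span ℂ (nu d '' (A : Set _)))
    (hB : P ∈ Submodule.span ℂ (nu d '' (B : Set _)))
    (hminA : ∀ S' ⊆ A, S' ≠ A → P ∉ Submodule.span ℂ (nu d '' (S' : Set _)))
    (hminB : ∀ S' ⊆ B, S' ≠ B → P ∉ Submodule.span ℂ (nu d '' (S' : Set _)))
    (hAB : A ≠ B) :
    ¬ LinearIndependent ℂ (fun p : ↥((A : Set (Projectivization ℂ (Fin (m + 1) → ℂ))) ∪ (B : Set _)) => nu d p.1) := by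
  classical
  intro hLI
  have hLI2 : LinearIndependent ℂ ((nu d) ∘ (Subtype.val : ((A : Set (Projectivization ℂ (Fin (m + 1) → ℂ))) ∪ (B : Set _) : Set _) → _)) := hLI
  have hLI' := linearIndepOn_iff.mp hLI2
  obtain ⟨l, hlA, hl⟩ := (Finsupp.mem_span_image_iff_linearCombination ℂ).1 hA
  obtain ⟨l', hl'B, hl'⟩ := (Finsupp.mem_span_image_iff_linearCombination ℂ).1 hB
  have hsub : l - l' ∈ Finsupp.supported ℂ ℂ
      ((A : Set (Projectivization ℂ (Fin (m + 1) → ℂ))) ∪ (B : Set _)) :=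
    sub_mem (Finsupp.supported_mono Set.subset_union_left hlA)
      (Finsupp.supported_mono Set.subset_union_right hl'B)
  have h0 : Finsupp.linearCombination ℂ (nu d) (l - l') = 0 := by
    rw [map_sub, hl, hl', sub_self]
  have hll' : l = l' := sub_eq_zero.1 (hLI' _ hsub h0)
  by_cases hABsub : A ⊆ B
  · -- B \ A is nonempty
    obtain ⟨b, hbB, hbA⟩ := Finset.not_subset.1 fun h => hAB (Finset.Subset.antisymm hABsub h)
    refine hminB (B.erase b) (Finset.erase_subset _ _)
      ((Finset.erase_ne_self).2 hbB) ?_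
    refine (Finsupp.mem_span_image_iff_linearCombination ℂ).2 ⟨l', ?_, hl'⟩
    intro x hx
    have hxB : x ∈ (B : Set _) := hl'B hx
    have hxb : x ≠ b := by
      rintro rfl
      have : l x ≠ 0 := by rwa [hll', ← Finsupp.mem_support_iff]
      exact hbA (hlA (Finsupp.mem_support_iff.2 this))
    simpa [and_comm] using Finset.mem_erase_of_ne_of_mem hxb hxB
  · obtain ⟨a, haA, haB⟩ := Finset.not_subset.1 hABsub
    refine hminA (A.erase a) (Finset.erase_subset _ _)
      ((Finset.erase_ne_self).2 haA) ?_
    refine (Finsupp.mem_span_image_iff_linearCombination ℂ).2 ⟨l, ?_, hl⟩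
    intro x hx
    have hxA : x ∈ (A : Set _) := hlA hx
    have hxa : x ≠ a := by
      rintro rfl
      have : l' x ≠ 0 := by rwa [← hll', ← Finsupp.mem_support_iff]
      exact haB (hl'B (Finsupp.mem_support_iff.2 this))
    simpa [and_comm] using Finset.mem_erase_of_ne_of_mem hxa hxA
end

section
/- Let Z be a finite set of points in ℙ^m with #Z ≤ 2d+1. If Z fails to impose independent conditions on hypersurfaces of degree d (i.e. h^1(ℐ_Z(d)) > 0), then there exists a line l ⊂ ℙ^m containing at least d+2 points of Z. -/
open MvPolynomial

/-!
Suppose every line meets `Z` in at most `d + 1` points. To see that the `ν_d(p)`, `p ∈ Z`, are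
linearly independent, separate each `p ∈ Z` from the rest by a degree-`d` form. Every line
through `p` carries at most `d` of the remaining `≤ 2d` points, so these points split into `d`
groups of at most two, no group containing two points collinear with `p`. Each group lies in a
hyperplane `φ_j = 0` missing `p`. Contracting with `φ_1, …, φ_d` (apolarity) is a linear
functional on forms sending `ℓ_v^d` to `d! ∏ φ_j(v)`, which kills `ν_d(q)` for `q ≠ p` but not
`ν_d(p)`.
-/

open Finset Module
open scoped LinearAlgebra.Projectivization

theorem linearIndependent_of_forall_exists_dual {ι K M : Type*} [DivisionRing K] [AddCommGroup M]
    [Module K M] {v : ι → M} (h : ∀ i, ∃ f : Dual K M, f (v i) ≠ 0 ∧ ∀ j ≠ i, f (v j) = 0) :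
    LinearIndependent K v := by
  refine linearIndependent_iff'.2 fun s g hg i hi => ?_
  obtain ⟨f, hfi, hfj⟩ := h i
  have := congrArg f hg
  rw [map_sum, map_zero, sum_eq_single_of_mem i hi fun j _ hji => by
    rw [map_smul, hfj j hji, smul_zero], map_smul, smul_eq_mul] at this
  exact (mul_eq_zero.1 this).resolve_right hfi

theorem List.SortedLE.add_one_le_count_of_getElem_eq {β : Type*} [PartialOrder β]
    [DecidableEq β] {l : List β} (hl : l.SortedLE) {i k : ℕ} (hk : i + k < l.length)
    (heq : l[i] = l[i + k]) : k + 1 ≤ l.count l[i] := by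
  have hblock : ((l.drop i).take (k + 1)).count l[i] = k + 1 := by
    rw [List.count_eq_length.2, List.length_take, List.length_drop]
    · omega
    intro b hb
    obtain ⟨m, hm, rfl⟩ := List.getElem_of_mem hb
    simp only [List.length_take, List.length_drop, lt_min_iff] at hm
    simp only [List.getElem_take, List.getElem_drop]
    exact le_antisymm (hl.getElem_le_getElem_of_le (by omega))
      (heq ▸ hl.getElem_le_getElem_of_le (by omega))
  exact hblock ▸ ((List.take_sublist _ _).trans (List.drop_sublist _ _)).count_le _

theorem Finset.exists_cover_injOn_card_le_two {α β : Type*} [DecidableEq β] (S : Finset α)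
    (c : α → β) {d : ℕ} (hS : #S ≤ 2 * d) (hc : ∀ b, #{a ∈ S | c a = b} ≤ d) :
    ∃ P : Fin d → Finset α, (∀ j, #(P j) ≤ 2 ∧ Set.InjOn c (P j)) ∧ ∀ a ∈ S, ∃ j, a ∈ P j := by
  classical
  -- Sort `S` by colour and pair the `j`-th entry with the `(j + d)`-th: a colour class is a block
  -- of at most `d` consecutive entries, so the two never share a colour.
  let _ : LinearOrder β := linearOrderOfSTO WellOrderingRel
  set l := S.toList.mergeSort (fun a b => c a ≤ c b)
  have hperm : l.Perm S.toList := List.mergeSort_perm _ _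
  have hsorted : (l.map c).SortedLE := by
    refine List.sortedLE_iff_pairwise.2 (List.pairwise_map.2 ?_)
    simpa using List.pairwise_mergeSort (le := fun a b => decide (c a ≤ c b))
      (fun _ _ _ => by simpa using le_trans) (fun a b => by simpa using le_total (c a) (c b))
      S.toList
  have hlen : l.length = #S := hperm.length_eq.trans (Finset.length_toList S)
  have hcount : ∀ b, (l.map c).count b ≤ d := by
    intro b
    rw [← Multiset.coe_count, ← Multiset.map_coe, Multiset.coe_eq_coe.2 hperm, coe_toList,
      Multiset.count_map]
    convert hc b using 1
    simp [Finset.card_def, eq_comm]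
  have hcross : ∀ {j a b}, l[j]? = some a → l[j + d]? = some b → c a ≠ c b := by
    intro j a b ha hb hab
    obtain ⟨hj, rfl⟩ := List.getElem?_eq_some_iff.1 ha
    obtain ⟨hjd, rfl⟩ := List.getElem?_eq_some_iff.1 hb
    have hblock := hsorted.add_one_le_count_of_getElem_eq (i := j) (k := d) (by simpa using hjd)
      (by simpa using hab)
    rw [List.getElem_map] at hblock
    have := hcount (c l[j])
    omega
  refine ⟨fun j => (l[(j : ℕ)]?).toFinset ∪ (l[j + d]?).toFinset, fun j => ⟨?_, ?_⟩, ?_⟩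
  · exact (card_union_le _ _).trans (by cases l[(j : ℕ)]? <;> cases l[j + d]? <;> simp)
  · intro a ha b hb hab
    simp only [coe_union, Set.mem_union, mem_coe, Option.mem_toFinset, Option.mem_def] at ha hb
    rcases ha with ha | ha <;> rcases hb with hb | hb
    · exact Option.some_injective _ (ha.symm.trans hb)
    · exact absurd hab (hcross ha hb)
    · exact absurd hab.symm (hcross hb ha)
    · exact Option.some_injective _ (ha.symm.trans hb)
  · intro a ha
    obtain ⟨i, hi⟩ := List.mem_iff_getElem?.1 ((hperm.mem_iff).2 (mem_toList.2 ha))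
    have : i < 2 * d := by
      have := (List.getElem?_eq_some_iff.1 hi).1
      omega
    by_cases hid : i < d
    · exact ⟨⟨i, hid⟩, by simp [hi]⟩
    · exact ⟨⟨i - d, by omega⟩, by simp [Nat.sub_add_cancel (not_lt.1 hid), hi]⟩

namespace Projectivization

variable {K V : Type*} [DivisionRing K] [AddCommGroup V] [Module K V]

theorem eq_of_submodule_le {p q : ℙ K V} (h : p.submodule ≤ q.submodule) : p = q :=
  submodule_injective <|
    Submodule.eq_of_le_of_finrank_eq h (by rw [finrank_submodule, finrank_submodule])

theorem finrank_sup_submodule_eq_two {p q : ℙ K V} (h : p ≠ q) :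
    finrank K ↥(p.submodule ⊔ q.submodule) = 2 := by
  rw [← independent_pair_iff_ne, independent_iff] at h
  rw [submodule_eq, submodule_eq, ← Submodule.span_insert, ← Matrix.range_cons_cons_empty _ _ ![],
    finrank_span_eq_card (by convert h using 1; ext i; fin_cases i <;> rfl), Fintype.card_fin]

theorem sup_submodule_eq_of_le_sup {p x y : ℙ K V} (hpx : p ≠ x) (hxy : x ≠ y)
    (hp : p.submodule ≤ x.submodule ⊔ y.submodule) :
    p.submodule ⊔ x.submodule = x.submodule ⊔ y.submodule := by
  refine line_unique hpx _ _ (finrank_sup_submodule_eq_two hpx) (finrank_sup_submodule_eq_two hxy)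
    ?_ ?_ ?_ ?_ <;> rw [Submodule.mem_projectivization_iff_submodule_le]
  exacts [le_sup_left, le_sup_right, hp, le_sup_left]

theorem exists_dual_ne_zero_of_injOn_sup {p : ℙ K V} {F : Finset (ℙ K V)} (hF : #F ≤ 2)
    (hp : p ∉ F) (hinj : Set.InjOn (fun q : ℙ K V => p.submodule ⊔ q.submodule) F) :
    ∃ f : Dual K V, f p.rep ≠ 0 ∧ ∀ q ∈ F, f q.rep = 0 := by
  classical
  suffices hspan : p.rep ∉ Submodule.span K (Projectivization.rep '' (F : Set (ℙ K V))) by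
    obtain ⟨f, hfp, hfF⟩ := Submodule.exists_dual_map_eq_bot_of_notMem hspan inferInstance
    refine ⟨f, hfp, fun q hq => ?_⟩
    have := Submodule.mem_map_of_mem (f := f)
      (Submodule.subset_span (Set.mem_image_of_mem Projectivization.rep hq))
    rwa [hfF, Submodule.mem_bot] at this
  intro hmem
  rw [← Submodule.span_singleton_le_iff_mem, ← submodule_eq] at hmem
  interval_cases h : #F
  · rw [Finset.card_eq_zero.1 h, coe_empty, Set.image_empty, Submodule.span_empty] at hmem
    exact p.rep_nonzero (Submodule.span_singleton_eq_bot.1 (submodule_eq p ▸ le_bot_iff.1 hmem))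
  · obtain ⟨x, rfl⟩ := Finset.card_eq_one.1 h
    rw [coe_singleton, Set.image_singleton, ← submodule_eq] at hmem
    exact hp (by simpa using eq_of_submodule_le hmem)
  · obtain ⟨x, y, hxy, rfl⟩ := Finset.card_eq_two.1 h
    rw [coe_pair, Set.image_pair, Submodule.span_insert, ← submodule_eq, ← submodule_eq] at hmem
    have hpx : p ≠ x := by rintro rfl; simp at hp
    have hpy : p ≠ y := by rintro rfl; simp at hp
    have hline_x := sup_submodule_eq_of_le_sup hpx hxy hmem
    have hline_y := sup_submodule_eq_of_le_sup hpy hxy.symm (sup_comm x.submodule _ ▸ hmem)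
    exact hxy (hinj (by simp) (by simp) (hline_x.trans (sup_comm _ _ |>.trans hline_y.symm)))

theorem exists_dual_family_separating {Z : Finset (ℙ K V)} {p : ℙ K V} {d : ℕ} (hp : p ∈ Z)
    (hZ : #Z ≤ 2 * d + 1)
    (hline : ∀ W : Submodule K V, finrank K W = 2 →
      {q | q ∈ Z ∧ q.submodule ≤ W}.ncard ≤ d + 1) :
    ∃ f : Fin d → Dual K V, (∀ j, f j p.rep ≠ 0) ∧ ∀ q ∈ Z, q ≠ p → ∃ j, f j q.rep = 0 := by
  classical
  have hfiber (W : Submodule K V) : #{q ∈ Z.erase p | p.submodule ⊔ q.submodule = W} ≤ d := by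
    rcases eq_empty_or_nonempty {q ∈ Z.erase p | p.submodule ⊔ q.submodule = W} with
      hempty | ⟨q, hqW⟩
    · simp [hempty]
    obtain ⟨hq, rfl⟩ := mem_filter.1 hqW
    have hsub : {r ∈ Z.erase p | p.submodule ⊔ r.submodule = p.submodule ⊔ q.submodule} ⊆
        {r ∈ Z | r.submodule ≤ p.submodule ⊔ q.submodule}.erase p := by
      intro r hr
      obtain ⟨hr, hrW⟩ := mem_filter.1 hr
      exact mem_erase.2 ⟨ne_of_mem_erase hr,
        mem_filter.2 ⟨mem_of_mem_erase hr, hrW ▸ le_sup_right⟩⟩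
    have hpW : p ∈ {r ∈ Z | r.submodule ≤ p.submodule ⊔ q.submodule} :=
      mem_filter.2 ⟨hp, le_sup_left⟩
    have hcard := hline _ (finrank_sup_submodule_eq_two (ne_of_mem_erase hq).symm)
    rw [← coe_filter, Set.ncard_coe_finset] at hcard
    have := card_le_card hsub
    rw [card_erase_of_mem hpW] at this
    omega
  obtain ⟨P, hP, hcover⟩ := (Z.erase p).exists_cover_injOn_card_le_two
    (fun q => p.submodule ⊔ q.submodule) (by rw [card_erase_of_mem hp]; omega) hfiber
  have hf : ∀ j, ∃ f : Dual K V, f p.rep ≠ 0 ∧ ∀ q ∈ (P j).erase p, f q.rep = 0 := fun j =>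
    exists_dual_ne_zero_of_injOn_sup (card_erase_le.trans (hP j).1) (notMem_erase p _)
      ((hP j).2.mono (by simp))
  choose f hfp hfP using hf
  refine ⟨f, hfp, fun q hq hqp => ?_⟩
  obtain ⟨j, hj⟩ := hcover q (mem_erase.2 ⟨hqp, hq⟩)
  exact ⟨j, hfP j q (mem_erase.2 ⟨hqp, hj⟩)⟩

end Projectivization

noncomputable def dualDerivation {n : ℕ} (f : Dual ℂ (Fin n → ℂ)) :
    Derivation ℂ (MvPolynomial (Fin n) ℂ) (MvPolynomial (Fin n) ℂ) :=
  mkDerivation ℂ fun i => C (f (Pi.single i 1))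

theorem dualDerivation_linForm {n : ℕ} (f : Dual ℂ (Fin n → ℂ)) (v : Fin n → ℂ) :
    dualDerivation f (linForm v) = C (f v) := by
  conv_rhs => rw [← univ_sum_single v]
  simp only [linForm, dualDerivation, ← smul_eq_C_mul, map_sum]
  refine sum_congr rfl fun i _ => ?_
  rw [Derivation.map_smul, mkDerivation_X, smul_eq_C_mul, ← C_mul, ← smul_eq_mul, ← map_smul,
    ← Pi.single_smul', smul_eq_mul, mul_one]

theorem dualDerivation_linForm_pow {n : ℕ} (f : Dual ℂ (Fin n → ℂ)) (v : Fin n → ℂ) (k : ℕ) :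
    dualDerivation f (linForm v ^ (k + 1)) = ((k + 1) * f v : ℂ) • linForm v ^ k := by
  rw [Derivation.leibniz_pow, dualDerivation_linForm, Nat.add_sub_cancel, smul_eq_mul,
    nsmul_eq_mul, smul_eq_C_mul, map_mul, map_add, map_natCast, map_one]
  push_cast
  ring

theorem list_prod_dualDerivation_linForm_pow {n : ℕ} (L : List (Dual ℂ (Fin n → ℂ)))
    (v : Fin n → ℂ) :
    (L.map fun f => (dualDerivation f : Module.End ℂ (MvPolynomial (Fin n) ℂ))).prod
      (linForm v ^ L.length) = C (L.length.factorial * (L.map (· v)).prod) := by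
  induction L using List.reverseRecOn with
  | nil => simp
  | append_singleton L f ih =>
    simp only [List.map_append, List.prod_append, List.map_singleton, List.prod_singleton,
      List.length_append, List.length_singleton, Module.End.mul_apply]
    rw [show ((dualDerivation f : Module.End ℂ _) (linForm v ^ (L.length + 1))) = _ from
      dualDerivation_linForm_pow f v L.length, map_smul, ih, smul_eq_C_mul, ← C_mul,
      Nat.factorial_succ]
    push_cast
    ring_nf

theorem exists_dual_linForm_pow_eq_prod {n d : ℕ} (f : Fin d → Dual ℂ (Fin n → ℂ)) :
    ∃ Λ : Dual ℂ (MvPolynomial (Fin n) ℂ),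
      ∀ v, Λ (linForm v ^ d) = d.factorial * ∏ j, f j v := by
  refine ⟨lcoeff ℂ 0 ∘ₗ ((List.ofFn f).map fun g => (dualDerivation g : Module.End ℂ _)).prod,
    fun v => ?_⟩
  have h := list_prod_dualDerivation_linForm_pow (List.ofFn f) v
  rw [List.length_ofFn] at h
  rw [LinearMap.comp_apply, h, lcoeff_apply, coeff_zero_C, List.map_ofFn, List.prod_ofFn]
  rfl

/-- If a finite set `Z ⊂ ℙ^m` with `#Z ≤ 2d+1` fails to impose independent conditions on
degree-`d` hypersurfaces, then some line (2-dimensional linear subspace) contains at least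
`d+2` points of `Z`. -/
theorem line_of_dependent_points {m d : ℕ}
    (Z : Finset (Projectivization ℂ (Fin (m + 1) → ℂ)))
    (hZ : Z.card ≤ 2 * d + 1)
    (hdep : ¬ LinearIndependent ℂ (fun p : ↥Z => nu d p.1)) :
    ∃ W : Submodule ℂ (Fin (m + 1) → ℂ), Module.finrank ℂ W = 2 ∧
      d + 2 ≤ {p : Projectivization ℂ (Fin (m + 1) → ℂ) | p ∈ Z ∧ p.submodule ≤ W}.ncard := by
  by_contra! hcon
  refine hdep (linearIndependent_of_forall_exists_dual fun p => ?_)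
  obtain ⟨φ, hφp, hφq⟩ := Projectivization.exists_dual_family_separating p.2 hZ
    fun W hW => Nat.le_of_lt_succ (hcon W hW)
  obtain ⟨Λ, hΛ⟩ := exists_dual_linForm_pow_eq_prod φ
  refine ⟨Λ, ?_, fun q hqp => ?_⟩
  · rw [nu, hΛ]
    exact mul_ne_zero (Nat.cast_ne_zero.2 d.factorial_ne_zero)
      (prod_ne_zero_iff.2 fun j _ => hφp j)
  · obtain ⟨j, hj⟩ := hφq q q.2 (Subtype.coe_injective.ne hqp)
    rw [nu, hΛ, prod_eq_zero (mem_univ j) hj, mul_zero]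
end

section
/- Let f be a binary form of degree d over ℂ. If the complex rank r_ℂ(f) = r ≤ (d+1)/2, then the set of r linear forms evincing the rank of f is unique up to proportionality; i.e., any two decompositions of f as a linear combination of the d-th powers of r pairwise non-proportional linear forms use the same set of linear forms (up to scalars). -/
open MvPolynomial

/-! ### Auxiliary definitions and lemmas -/

/-- The linear binary form with coefficient vector `w`. -/
noncomputable def lin (w : ℂ × ℂ) : MvPolynomial (Fin 2) ℂ := C w.1 * X 0 + C w.2 * X 1

/-- The cross-determinant of two vectors in `ℂ²`. -/
def crs (u v : ℂ × ℂ) : ℂ := u.1 * v.2 - u.2 * v.1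

/-- The differential operator `v.2 ∂₀ - v.1 ∂₁`, which annihilates `lin v`. -/
noncomputable def Dop (v : ℂ × ℂ) (p : MvPolynomial (Fin 2) ℂ) : MvPolynomial (Fin 2) ℂ :=
  v.2 • pderiv 0 p - v.1 • pderiv 1 p

lemma lin_smul (a : ℂ) (w : ℂ × ℂ) : lin (a • w) = a • lin w := by
  simp [lin, smul_eq_C_mul]; ring

lemma lin_ne_zero {w : ℂ × ℂ} (hw : w ≠ 0) : lin w ≠ 0 := by
  intro h
  apply hw
  have h1 := congrArg (eval (fun t : Fin 2 => if t = 0 then (1:ℂ) else 0)) h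
  have h2 := congrArg (eval (fun t : Fin 2 => if t = 0 then (0:ℂ) else 1)) h
  simp [lin] at h1 h2
  exact Prod.ext h1 h2

lemma pderiv0_lin (w : ℂ × ℂ) : pderiv 0 (lin w) = C w.1 := by
  simp [lin, pderiv_C_mul, pderiv_X_self, pderiv_X_of_ne (show (1:Fin 2) ≠ 0 by decide)]

lemma pderiv1_lin (w : ℂ × ℂ) : pderiv 1 (lin w) = C w.2 := by
  simp [lin, pderiv_C_mul, pderiv_X_self, pderiv_X_of_ne (show (0:Fin 2) ≠ 1 by decide)]

lemma Dop_sum {ι : Type*} (v : ℂ × ℂ) (s : Finset ι) (g : ι → MvPolynomial (Fin 2) ℂ) :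
    Dop v (∑ i ∈ s, g i) = ∑ i ∈ s, Dop v (g i) := by
  simp [Dop, map_sum, Finset.smul_sum, Finset.sum_sub_distrib]

lemma Dop_term (v w : ℂ × ℂ) (μ : ℂ) (m : ℕ) :
    Dop v (μ • lin w ^ m) = (μ * ((m : ℂ) * crs w v)) • lin w ^ (m - 1) := by
  have h0 : pderiv 0 (lin w ^ m) = m • lin w ^ (m-1) • C w.1 := by
    rw [(pderiv 0).leibniz_pow, pderiv0_lin]
  have h1 : pderiv 1 (lin w ^ m) = m • lin w ^ (m-1) • C w.2 := by
    rw [(pderiv 1).leibniz_pow, pderiv1_lin]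
  rw [Dop, Derivation.map_smul, Derivation.map_smul, h0, h1]
  rw [smul_eq_mul, smul_eq_mul, smul_eq_C_mul, smul_eq_C_mul, smul_eq_C_mul, smul_eq_C_mul,
    smul_eq_C_mul, nsmul_eq_mul, nsmul_eq_mul, crs,
    show ((m : MvPolynomial (Fin 2) ℂ)) = C ((m : ℂ)) from (map_natCast (C : ℂ →+* _) m).symm]
  rw [map_mul, map_mul, map_sub, map_mul, map_mul]
  ring

lemma crs_self (w : ℂ × ℂ) : crs w w = 0 := by simp [crs]; ring

lemma crs_anti (u v : ℂ × ℂ) : crs u v = -crs v u := by simp [crs]; ring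

lemma prop_of_crs_zero {u v : ℂ × ℂ} (hu : u ≠ 0) (h : crs u v = 0) : ∃ t : ℂ, v = t • u := by
  rcases eq_or_ne u.1 0 with h1 | h1
  · have h2 : u.2 ≠ 0 := fun h2 => hu (Prod.ext h1 h2)
    have hv1 : v.1 = 0 := by
      rw [crs, h1] at h
      have : u.2 * v.1 = 0 := by linear_combination -h
      exact (mul_eq_zero.mp this).resolve_left h2
    refine ⟨v.2 / u.2, Prod.ext ?_ ?_⟩
    · simp [h1, hv1]
    · simp only [Prod.smul_snd, smul_eq_mul]
      exact (div_mul_cancel₀ v.2 h2).symm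
  · refine ⟨v.1 / u.1, Prod.ext ?_ ?_⟩
    · simp only [Prod.smul_fst, smul_eq_mul]
      exact (div_mul_cancel₀ v.1 h1).symm
    · simp only [Prod.smul_snd, smul_eq_mul]
      rw [crs] at h
      rw [div_mul_eq_mul_div, eq_div_iff h1]
      linear_combination h

/-- Powers of at most `m + 1` pairwise non-proportional linear binary forms are
linearly independent. -/
lemma lemB {ι : Type*} [DecidableEq ι] (s : Finset ι) : ∀ (m : ℕ), s.card ≤ m + 1 →
    ∀ (w : ι → ℂ × ℂ), (∀ i ∈ s, w i ≠ 0) →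
    (∀ i ∈ s, ∀ j ∈ s, i ≠ j → crs (w i) (w j) ≠ 0) →
    ∀ μ : ι → ℂ, ∑ i ∈ s, μ i • lin (w i) ^ m = 0 → ∀ i ∈ s, μ i = 0 := by
  induction s using Finset.induction_on with
  | empty => intro m _ w _ _ μ _ i hi; exact absurd hi (Finset.notMem_empty i)
  | @insert a s ha IH =>
    intro m hcard w hw0 hcross μ hrel i hi
    rw [Finset.sum_insert ha] at hrel
    rw [Finset.card_insert_of_notMem ha] at hcard
    have hder : ∑ j ∈ s, (μ j * ((m : ℂ) * crs (w j) (w a))) • lin (w j) ^ (m - 1) = 0 := by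
      have h2 : Dop (w a) (μ a • lin (w a) ^ m + ∑ j ∈ s, μ j • lin (w j) ^ m) = 0 := by
        rw [hrel]; simp [Dop]
      rw [show (μ a • lin (w a) ^ m + ∑ j ∈ s, μ j • lin (w j) ^ m)
            = ∑ j ∈ insert a s, μ j • lin (w j) ^ m by rw [Finset.sum_insert ha]] at h2
      rw [Dop_sum, Finset.sum_insert ha, Dop_term, crs_self] at h2
      simp only [mul_zero, zero_smul, zero_add] at h2
      calc ∑ j ∈ s, (μ j * ((m : ℂ) * crs (w j) (w a))) • lin (w j) ^ (m - 1)
          = ∑ j ∈ s, Dop (w a) (μ j • lin (w j) ^ m) := by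
            refine Finset.sum_congr rfl fun j hj => ?_; rw [Dop_term]
        _ = 0 := h2
    have hIH := IH (m - 1) (by omega) w (fun i hi => hw0 i (Finset.mem_insert_of_mem hi))
      (fun i hi j hj hij => hcross i (Finset.mem_insert_of_mem hi) j
        (Finset.mem_insert_of_mem hj) hij) _ hder
    have key : ∀ j ∈ s, μ j = 0 := by
      intro j hj
      have hm : m ≠ 0 := by
        have := Finset.card_pos.mpr ⟨j, hj⟩
        omega
      have hj0 := hIH j hj
      have hcr : crs (w j) (w a) ≠ 0 :=
        hcross j (Finset.mem_insert_of_mem hj) a (Finset.mem_insert_self a s)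
          (fun h => ha (h ▸ hj))
      have hmC : (m : ℂ) ≠ 0 := Nat.cast_ne_zero.mpr hm
      rcases mul_eq_zero.mp hj0 with h | h
      · exact h
      · rcases mul_eq_zero.mp h with h' | h'
        · exact absurd h' hmC
        · exact absurd h' hcr
    rcases Finset.mem_insert.mp hi with rfl | his
    · have hsum0 : ∑ j ∈ s, μ j • lin (w j) ^ m = 0 :=
        Finset.sum_eq_zero fun j hj => by rw [key j hj, zero_smul]
      rw [hsum0, add_zero] at hrel
      have := lin_ne_zero (hw0 i (Finset.mem_insert_self i s))
      rcases smul_eq_zero.mp hrel with h | h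
      · exact h
      · exact absurd h (pow_ne_zero m this)
    · exact key i his

/-- The `m`-th power of a linear form does not lie in the span of the `m`-th powers of at
most `m` linear forms, none of which is proportional to it. -/
lemma lemC {ι : Type*} [DecidableEq ι] (s : Finset ι) : ∀ (m : ℕ), s.card ≤ m →
    ∀ (w : ι → ℂ × ℂ) (p : ℂ × ℂ) (b : ℂ) (μ : ι → ℂ), p ≠ 0 → b ≠ 0 →
    (∀ j ∈ s, w j ≠ 0) → (∀ j ∈ s, crs p (w j) ≠ 0) →
    b • lin p ^ m = ∑ j ∈ s, μ j • lin (w j) ^ m → False := by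
  induction s using Finset.strongInductionOn with
  | _ s IH =>
    intro m hcard w p b μ hp hb hw0 hpw hrel
    by_cases hpair : ∀ j1 ∈ s, ∀ j2 ∈ s, j1 ≠ j2 → crs (w j1) (w j2) ≠ 0
    · set s' : Finset (Option ι) := insert none (s.map Function.Embedding.some) with hs'
      have hnone : (none : Option ι) ∉ s.map Function.Embedding.some := by simp
      have hcard' : s'.card ≤ m + 1 := by
        rw [hs', Finset.card_insert_of_notMem hnone, Finset.card_map]; omega
      set w' : Option ι → ℂ × ℂ := fun o => o.elim p w with hw'
      set μ' : Option ι → ℂ := fun o => o.elim (-b) μ with hμ'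
      have hrel' : ∑ o ∈ s', μ' o • lin (w' o) ^ m = 0 := by
        rw [hs', Finset.sum_insert hnone, Finset.sum_map]
        simp only [Function.Embedding.some_apply, hw', hμ', Option.elim]
        rw [← hrel]
        simp [neg_smul]
      have := lemB s' m hcard' w'
        (by
          intro o ho
          rcases o with _ | j
          · exact hp
          · simp only [hw', Option.elim]
            rw [hs', Finset.mem_insert] at ho
            rcases ho with h | h
            · exact absurd h (by simp)
            · exact hw0 j (by simpa using h))
        (by
          intro o1 ho1 o2 ho2 hne
          have mem : ∀ o ∈ s', o = none ∨ ∃ j ∈ s, o = some j := by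
            intro o ho
            rw [hs', Finset.mem_insert] at ho
            rcases ho with h | h
            · exact Or.inl h
            · right; simpa using (Finset.mem_map.mp h).imp (fun j hj => ⟨hj.1, hj.2.symm⟩)
          rcases mem o1 ho1 with rfl | ⟨j1, hj1, rfl⟩ <;> rcases mem o2 ho2 with rfl | ⟨j2, hj2, rfl⟩
          · exact absurd rfl hne
          · exact hpw j2 hj2
          · simpa only [hw', Option.elim] using (crs_anti (w j1) p) ▸ neg_ne_zero.mpr (hpw j1 hj1)
          · exact hpair j1 hj1 j2 hj2 (fun h => hne (h ▸ rfl)))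
        μ' hrel' none (Finset.mem_insert_self _ _)
      simp only [hμ', Option.elim, neg_eq_zero] at this
      exact hb this
    · push_neg at hpair
      obtain ⟨j1, hj1, j2, hj2, hne, hcr⟩ := hpair
      obtain ⟨t, ht⟩ := prop_of_crs_zero (hw0 j1 hj1) hcr
      have hj1' : j1 ∈ s.erase j2 := Finset.mem_erase.mpr ⟨hne, hj1⟩
      set μ'' : ι → ℂ := fun j => μ j + if j = j1 then μ j2 * t ^ m else 0 with hμ''
      have hrel2 : b • lin p ^ m = ∑ j ∈ s.erase j2, μ'' j • lin (w j) ^ m := by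
        have hsplit : ∑ j ∈ s, μ j • lin (w j) ^ m
            = ∑ j ∈ s.erase j2, μ j • lin (w j) ^ m + μ j2 • lin (w j2) ^ m :=
          (Finset.sum_erase_add s _ hj2).symm
        have hFj2 : lin (w j2) ^ m = t ^ m • lin (w j1) ^ m := by
          rw [ht, lin_smul, smul_pow]
        have : ∑ j ∈ s.erase j2, μ'' j • lin (w j) ^ m
            = ∑ j ∈ s.erase j2, μ j • lin (w j) ^ m + (μ j2 * t ^ m) • lin (w j1) ^ m := by
          rw [hμ'']
          simp only [add_smul, ite_smul, zero_smul, Finset.sum_add_distrib]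
          congr 1
          rw [Finset.sum_ite_eq' (s.erase j2) j1 (fun j => (μ j2 * t ^ m) • lin (w j) ^ m),
            if_pos hj1']
        rw [this, hrel, hsplit, hFj2, smul_smul]
      exact IH (s.erase j2) (Finset.erase_ssubset hj2) m
        (le_trans (le_of_lt (Finset.card_erase_lt_of_mem hj2)) hcard) w p b μ'' hp hb
        (fun j hj => hw0 j (Finset.mem_of_mem_erase hj))
        (fun j hj => hpw j (Finset.mem_of_mem_erase hj)) hrel2

lemma deg_two (m : Fin 2 →₀ ℕ) : m.degree = m 0 + m 1 := by
  rw [Finsupp.degree]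
  show ∑ i ∈ m.support, m i = m 0 + m 1
  rw [Finset.sum_subset (Finset.subset_univ m.support)
    (fun x _ hx => Finsupp.notMem_support_iff.mp hx)]
  exact Fin.sum_univ_two m

lemma classify (m : Fin 2 →₀ ℕ) (h : m.degree = 1) :
    m = Finsupp.single 0 1 ∨ m = Finsupp.single 1 1 := by
  rw [deg_two] at h
  rcases Nat.eq_zero_or_pos (m 0) with h0 | h0
  · right
    ext x
    fin_cases x <;> simp [Finsupp.single_apply] <;> omega
  · left
    ext x
    fin_cases x <;> simp [Finsupp.single_apply] <;> omega

/-- A homogeneous binary form of degree 1 is `lin` of its coefficient vector. -/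
lemma lemA {p : MvPolynomial (Fin 2) ℂ} (hp : p.IsHomogeneous 1) :
    p = lin (coeff (Finsupp.single 0 1) p, coeff (Finsupp.single 1 1) p) := by
  have hne : (Finsupp.single (0 : Fin 2) 1) ≠ Finsupp.single 1 1 := by
    intro h
    have := DFunLike.congr_fun h 0
    simp [Finsupp.single_apply] at this
  ext m
  rw [lin]
  simp only [coeff_add, coeff_C_mul, coeff_X']
  by_cases h0 : Finsupp.single (0 : Fin 2) 1 = m
  · subst h0
    rw [if_pos rfl, if_neg (fun h => hne h.symm)]
    ring
  · by_cases h1 : Finsupp.single (1 : Fin 2) 1 = m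
    · subst h1
      rw [if_neg h0, if_pos rfl]
      ring
    · rw [if_neg h0, if_neg h1]
      have hd : m.degree ≠ 1 := by
        intro hd
        rcases classify m hd with h | h
        · exact h0 h.symm
        · exact h1 h.symm
      rw [hp.coeff_eq_zero hd]
      ring

/-- Uniqueness of low-rank decompositions of binary forms: if a binary form `f` of degree `d`
admits two decompositions as linear combinations of `d`-th powers of `r` pairwise
non-proportional linear forms with nonzero coefficients, and `r ≤ (d+1)/2`, then the two
sets of linear forms coincide up to order and scalars. -/
theorem binary_low_rank_uniqueness {d r : ℕ} (hr : 2 * r ≤ d + 1)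
    (f : MvPolynomial (Fin 2) ℂ)
    (c e : Fin r → ℂ) (L M : Fin r → MvPolynomial (Fin 2) ℂ)
    (hc : ∀ i, c i ≠ 0) (he : ∀ i, e i ≠ 0)
    (hL : ∀ i, (L i).IsHomogeneous 1) (hM : ∀ i, (M i).IsHomogeneous 1)
    (hL0 : ∀ i, L i ≠ 0) (hM0 : ∀ i, M i ≠ 0)
    (hLprop : ∀ i j, i ≠ j → ∀ a : ℂ, L i ≠ a • L j)
    (hMprop : ∀ i j, i ≠ j → ∀ a : ℂ, M i ≠ a • M j)
    (h1 : f = ∑ i, c i • L i ^ d) (h2 : f = ∑ i, e i • M i ^ d) :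
    ∃ σ : Equiv.Perm (Fin r), ∀ i, ∃ a : ℂ, a ≠ 0 ∧ M (σ i) = a • L i := by
  rcases Nat.eq_zero_or_pos r with rfl | hrpos
  · exact ⟨Equiv.refl _, fun i => i.elim0⟩
  set u : Fin r → ℂ × ℂ := fun i =>
    (coeff (Finsupp.single 0 1) (L i), coeff (Finsupp.single 1 1) (L i)) with hudef
  set v : Fin r → ℂ × ℂ := fun j =>
    (coeff (Finsupp.single 0 1) (M j), coeff (Finsupp.single 1 1) (M j)) with hvdef
  have hLu : ∀ i, L i = lin (u i) := fun i => lemA (hL i)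
  have hMv : ∀ j, M j = lin (v j) := fun j => lemA (hM j)
  have hu0 : ∀ i, u i ≠ 0 := by
    intro i h
    apply hL0 i
    rw [hLu i, h]
    simp [lin]
  have hv0 : ∀ j, v j ≠ 0 := by
    intro j h
    apply hM0 j
    rw [hMv j, h]
    simp [lin]
  have key : ∀ i0, ∃ j, ∃ a : ℂ, a ≠ 0 ∧ M j = a • L i0 := by
    intro i0
    by_contra hcon
    push_neg at hcon
    set s : Finset (Fin r ⊕ Fin r) :=
      ((Finset.univ.erase i0).map ⟨Sum.inl, Sum.inl_injective⟩) ∪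
        (Finset.univ.map ⟨Sum.inr, Sum.inr_injective⟩) with hsdef
    have hdisj : Disjoint ((Finset.univ.erase i0).map ⟨Sum.inl, Sum.inl_injective⟩)
        ((Finset.univ.map ⟨Sum.inr, Sum.inr_injective⟩) : Finset (Fin r ⊕ Fin r)) := by
      simp only [Finset.disjoint_left, Finset.mem_map, Function.Embedding.coeFn_mk]
      rintro x ⟨i, _, rfl⟩ ⟨j, _, h⟩
      exact Sum.inl_ne_inr h.symm
    have hcards : s.card ≤ d := by
      rw [hsdef, Finset.card_union_of_disjoint hdisj, Finset.card_map, Finset.card_map,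
        Finset.card_erase_of_mem (Finset.mem_univ i0), Finset.card_univ, Fintype.card_fin]
      omega
    have htot : ∑ i, c i • lin (u i) ^ d = ∑ j, e j • lin (v j) ^ d := by
      calc ∑ i, c i • lin (u i) ^ d = ∑ i, c i • L i ^ d :=
            Finset.sum_congr rfl (fun i _ => by rw [hLu i])
        _ = f := h1.symm
        _ = ∑ j, e j • M j ^ d := h2
        _ = ∑ j, e j • lin (v j) ^ d := Finset.sum_congr rfl (fun j _ => by rw [hMv j])
    have hrel : c i0 • lin (u i0) ^ d
        = ∑ k ∈ s, (Sum.elim (fun i => -c i) e k) • lin (Sum.elim u v k) ^ d := by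
      rw [hsdef, Finset.sum_union hdisj, Finset.sum_map, Finset.sum_map]
      simp only [Function.Embedding.coeFn_mk, Sum.elim_inl, Sum.elim_inr]
      have hsp : c i0 • lin (u i0) ^ d + ∑ i ∈ Finset.univ.erase i0, c i • lin (u i) ^ d
          = ∑ i, c i • lin (u i) ^ d :=
        Finset.add_sum_erase Finset.univ (fun i => c i • lin (u i) ^ d) (Finset.mem_univ i0)
      have : c i0 • lin (u i0) ^ d
          = ∑ j, e j • lin (v j) ^ d - ∑ i ∈ Finset.univ.erase i0, c i • lin (u i) ^ d := by
        rw [← htot, ← hsp]; abel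
      rw [this]
      simp only [neg_smul, Finset.sum_neg_distrib]
      abel
    refine lemC s d hcards (Sum.elim u v) (u i0) (c i0) (Sum.elim (fun i => -c i) e)
      (hu0 i0) (hc i0) ?_ ?_ hrel
    · rintro (i | j) _
      · exact hu0 i
      · exact hv0 j
    · rintro (i | j) hk
      · have hi : i ≠ i0 := by
          rw [hsdef, Finset.mem_union, Finset.mem_map, Finset.mem_map] at hk
          rcases hk with ⟨i', hi', h⟩ | ⟨j', _, h⟩
          · simp only [Function.Embedding.coeFn_mk] at h
            rcases Sum.inl.inj h with rfl
            exact (Finset.mem_erase.mp hi').1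
          · exact absurd h (by simp)
        intro hcr
        obtain ⟨t, ht⟩ := prop_of_crs_zero (hu0 i0) hcr
        rw [Sum.elim_inl] at ht
        exact hLprop i i0 hi t (by rw [hLu i, hLu i0, ht, lin_smul])
      · intro hcr
        obtain ⟨t, ht⟩ := prop_of_crs_zero (hu0 i0) hcr
        rw [Sum.elim_inr] at ht
        have hMt : M j = t • L i0 := by rw [hMv j, hLu i0, ht, lin_smul]
        have ht0 : t ≠ 0 := by
          intro h
          apply hM0 j
          rw [hMt, h, zero_smul]
        exact hcon j t ht0 hMt
  choose φ a ha hMa using key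
  have hinj : Function.Injective φ := by
    intro i1 i2 h
    by_contra hne
    have hq1 : M (φ i1) = a i1 • L i1 := hMa i1
    have hq2 : M (φ i1) = a i2 • L i2 := by rw [h]; exact hMa i2
    apply hLprop i1 i2 hne (a i2 / a i1)
    calc L i1 = (a i1)⁻¹ • (a i1 • L i1) := by
          rw [smul_smul, inv_mul_cancel₀ (ha i1), one_smul]
      _ = (a i1)⁻¹ • (a i2 • L i2) := by rw [← hq1, hq2]
      _ = (a i2 / a i1) • L i2 := by rw [smul_smul, div_eq_inv_mul]
  exact ⟨Equiv.ofBijective φ (Finite.injective_iff_bijective.mp hinj),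
    fun i => ⟨a i, ha i, hMa i⟩⟩
end

section
/- Suppose P is a real homogeneous polynomial of degree d with r_ℂ(P) + r_ℝ(P) ≤ 3d - 1 and r_ℂ(P) ≠ r_ℝ(P). Let S_ℂ ⊂ ℙ^m(ℂ) evince r_ℂ(P) and S_ℝ ⊂ ℙ^m(ℝ) evince r_ℝ(P). Then the union S_ℂ ∪ S_ℝ fails to impose independent conditions on degree-d hypersurfaces: h^1(ℐ_{S_ℂ ∪ S_ℝ}(d)) > 0, i.e., the Veronese images ν_d(S_ℂ ∪ S_ℝ) are linearly dependent. -/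
open MvPolynomial

/-- The real linear form with coefficient vector `v`. -/
noncomputable def linFormR {n : ℕ} (v : Fin n → ℝ) : MvPolynomial (Fin n) ℝ :=
  ∑ i, C (v i) * X i

/-- The complex linear form with coefficient vector `v`. -/
noncomputable def linFormC {n : ℕ} (v : Fin n → ℂ) : MvPolynomial (Fin n) ℂ :=
  ∑ i, C (v i) * X i

/-- The affine cone version of the real degree-`d` Veronese embedding. -/
noncomputable def nuR {n : ℕ} (d : ℕ) (p : Projectivization ℝ (Fin n → ℝ)) :
    MvPolynomial (Fin n) ℝ :=
  linFormR p.rep ^ d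

/-- The affine cone version of the complex degree-`d` Veronese embedding. -/
noncomputable def nuC {n : ℕ} (d : ℕ) (p : Projectivization ℂ (Fin n → ℂ)) :
    MvPolynomial (Fin n) ℂ :=
  linFormC p.rep ^ d

/-- The inclusion `ℙ^m(ℝ) ⊆ ℙ^m(ℂ)`. -/
noncomputable def toC {n : ℕ} (p : Projectivization ℝ (Fin n → ℝ)) :
    Projectivization ℂ (Fin n → ℂ) :=
  Projectivization.mk ℂ (fun i => (p.rep i : ℂ))
    (fun h => p.rep_nonzero (funext fun i => Complex.ofReal_eq_zero.mp (congrFun h i)))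

/-!
If the Veronese images of `S_ℂ ∪ S_ℝ` were linearly independent, the complexification of `P`
would have a unique expansion in them, so it would lie in the span of the Veronese images of the
real points of `S_ℂ ∩ S_ℝ`. Taking real parts of the coefficients, so would `P` itself. Hence both
ranks are at most `#(S_ℂ ∩ S_ℝ) ≤ min(#S_ℂ, #S_ℝ) = min(r_ℂ(P), r_ℝ(P))`, forcing `r_ℂ(P) = r_ℝ(P)`.
-/

theorem LinearIndepOn.mem_span_image_inter {R M ι : Type*} [Ring R] [AddCommGroup M] [Module R M]
    {v : ι → M} {s t : Set ι} (hv : LinearIndepOn R v (s ∪ t)) {x : M}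
    (hs : x ∈ Submodule.span R (v '' s)) (ht : x ∈ Submodule.span R (v '' t)) :
    x ∈ Submodule.span R (v '' (s ∩ t)) := by
  rw [Finsupp.mem_span_image_iff_linearCombination R] at hs ht ⊢
  obtain ⟨l₁, hl₁, rfl⟩ := hs
  obtain ⟨l₂, hl₂, h⟩ := ht
  obtain rfl : l₂ = l₁ := linearIndepOn_iffₛ.mp hv l₂
    (Finsupp.supported_mono Set.subset_union_right hl₂) l₁
    (Finsupp.supported_mono Set.subset_union_left hl₁) h
  exact ⟨l₂, Set.subset_inter hl₁ hl₂, rfl⟩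

theorem Submodule.span_image_le_of_forall_eq_smul {R M ι : Type*} [Semiring R] [AddCommMonoid M]
    [Module R M] {f g : ι → M} (h : ∀ i, ∃ r : R, f i = r • g i) (s : Set ι) :
    Submodule.span R (f '' s) ≤ Submodule.span R (g '' s) := by
  refine Submodule.span_le.mpr ?_
  rintro _ ⟨i, hi, rfl⟩
  obtain ⟨r, hr⟩ := h i
  rw [hr]
  exact Submodule.smul_mem _ _ (Submodule.subset_span ⟨i, hi, rfl⟩)

theorem Submodule.span_image_eq_of_forall_eq_units_smul {R M ι : Type*} [Semiring R]
    [AddCommMonoid M] [Module R M] {f g : ι → M} (h : ∀ i, ∃ u : Rˣ, f i = u • g i)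
    (s : Set ι) : Submodule.span R (f '' s) = Submodule.span R (g '' s) := by
  refine le_antisymm (span_image_le_of_forall_eq_smul (fun i => ?_) s)
    (span_image_le_of_forall_eq_smul (fun i => ?_) s) <;> obtain ⟨u, hu⟩ := h i
  · exact ⟨u, hu⟩
  · exact ⟨(u⁻¹ : Rˣ), by rw [hu, Units.smul_def, smul_smul, Units.inv_mul, one_smul]⟩

namespace MvPolynomial

theorem isHomogeneous_sum_C_mul_X {σ K : Type*} [Fintype σ] [CommSemiring K] (v : σ → K) :
    (∑ i, C (v i) * X i : MvPolynomial σ K).IsHomogeneous 1 :=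
  IsHomogeneous.sum _ _ _ fun i _ => isHomogeneous_C_mul_X (v i) i

theorem map_mem_span_image_map {σ K L : Type*} [CommSemiring K] [CommSemiring L] (f : K →+* L)
    {s : Set (MvPolynomial σ K)} {P : MvPolynomial σ K} (h : P ∈ Submodule.span K s) :
    map f P ∈ Submodule.span L (map f '' s) := by
  induction h using Submodule.span_induction with
  | mem x hx => exact Submodule.subset_span ⟨x, hx, rfl⟩
  | zero => simp
  | add x y _ _ hx hy => rw [map_add]; exact add_mem hx hy
  | smul r x _ hx =>
    rw [smul_eq_C_mul, map_mul, map_C, ← smul_eq_C_mul]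
    exact Submodule.smul_mem _ _ hx

theorem mem_span_of_map_mem_span_image_map {σ : Type*} {s : Set (MvPolynomial σ ℝ)}
    {P : MvPolynomial σ ℝ}
    (h : map (algebraMap ℝ ℂ) P ∈ Submodule.span ℂ (map (algebraMap ℝ ℂ) '' s)) :
    P ∈ Submodule.span ℝ s := by
  obtain ⟨l, hl, hP⟩ := (Finsupp.mem_span_image_iff_linearCombination ℂ).mp h
  have hre : P = ∑ q ∈ l.support, (l q).re • q := by
    ext μ
    have := congrArg (fun Q => (coeff μ Q).re) hP
    simpa [Finsupp.linearCombination_apply, Finsupp.sum, coeff_sum, coeff_map, Complex.mul_re]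
      using this.symm
  rw [hre]
  exact Submodule.sum_mem _ fun q hq => Submodule.smul_mem _ _ (Submodule.subset_span (hl hq))

end MvPolynomial

/-- `cRank` and `rRank` are this rank for `K = ℂ` and `K = ℝ`. -/
noncomputable def waringRank {σ : Type*} (K : Type*) [CommSemiring K] (d : ℕ)
    (P : MvPolynomial σ K) : ℕ :=
  sInf {r : ℕ | ∃ (c : Fin r → K) (L : Fin r → MvPolynomial σ K),
    (∀ i, c i ≠ 0) ∧ (∀ i, (L i).IsHomogeneous 1) ∧ P = ∑ i, c i • L i ^ d}

theorem waringRank_le_card_of_mem_span {σ ι K : Type*} [CommSemiring K] {d : ℕ}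
    {P : MvPolynomial σ K} {L : ι → MvPolynomial σ K} (hL : ∀ i, (L i).IsHomogeneous 1)
    {s : Finset ι} (hP : P ∈ Submodule.span K ((fun i => L i ^ d) '' s)) :
    waringRank K d P ≤ s.card := by
  classical
  obtain ⟨l, hl, rfl⟩ := (Finsupp.mem_span_image_iff_linearCombination K).mp hP
  let e := l.support.equivFin
  refine le_trans (Nat.sInf_le ?_) (Finset.card_le_card (Finset.coe_subset.mp hl))
  refine ⟨fun j => l (e.symm j), fun j => L (e.symm j),
    fun j => Finsupp.mem_support_iff.mp (e.symm j).2, fun j => hL _, ?_⟩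
  rw [Finsupp.linearCombination_apply, Finsupp.sum, ← Finset.sum_coe_sort]
  exact (Equiv.sum_comp e.symm _).symm

theorem cRank_le_card_of_mem_span_s17 {n d : ℕ} {P : MvPolynomial (Fin n) ℂ}
    {S : Finset (Projectivization ℂ (Fin n → ℂ))}
    (hP : P ∈ Submodule.span ℂ (nuC d '' S)) : cRank d P ≤ S.card :=
  waringRank_le_card_of_mem_span (d := d)
    (L := fun p : Projectivization ℂ (Fin n → ℂ) => linFormC p.rep)
    (fun p => isHomogeneous_sum_C_mul_X p.rep) hP

theorem rRank_le_card_of_mem_span_s17 {n d : ℕ} {P : MvPolynomial (Fin n) ℝ}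
    {S : Finset (Projectivization ℝ (Fin n → ℝ))}
    (hP : P ∈ Submodule.span ℝ (nuR d '' S)) : rRank d P ≤ S.card :=
  waringRank_le_card_of_mem_span (d := d)
    (L := fun p : Projectivization ℝ (Fin n → ℝ) => linFormR p.rep)
    (fun p => isHomogeneous_sum_C_mul_X p.rep) hP

theorem toC_injective {n : ℕ} : Function.Injective (toC (n := n)) := by
  intro p q h
  obtain ⟨a, ha⟩ := (Projectivization.mk_eq_mk_iff' ℂ _ _ _ _).mp h
  rw [← Projectivization.mk_rep p, ← Projectivization.mk_rep q,
    Projectivization.mk_eq_mk_iff']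
  exact ⟨a.re, funext fun i => by simpa using congrArg Complex.re (congrFun ha i)⟩

theorem linFormC_smul {n : ℕ} (c : ℂ) (v : Fin n → ℂ) :
    linFormC (c • v) = C c * linFormC v := by
  simp only [linFormC, Finset.mul_sum, Pi.smul_apply, smul_eq_mul, map_mul, mul_assoc]

theorem map_nuR {n d : ℕ} (q : Projectivization ℝ (Fin n → ℝ)) :
    map (algebraMap ℝ ℂ) (nuR d q) = linFormC (fun i => (q.rep i : ℂ)) ^ d := by
  simp [nuR, linFormR, linFormC]

theorem exists_nuC_toC_eq_units_smul {n d : ℕ} (q : Projectivization ℝ (Fin n → ℝ)) :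
    ∃ w : ℂˣ, nuC d (toC q) = w • map (algebraMap ℝ ℂ) (nuR d q) := by
  obtain ⟨a, ha⟩ : ∃ a : ℂˣ, a • (fun i => (q.rep i : ℂ)) = (toC q).rep :=
    Projectivization.exists_smul_eq_mk_rep ℂ _ _
  refine ⟨a ^ d, ?_⟩
  rw [map_nuR, nuC, ← ha, Units.smul_def, linFormC_smul, mul_pow, ← map_pow, Units.smul_def,
    smul_eq_C_mul, Units.val_pow_eq_pow_val]

theorem span_nuC_image_toC {n d : ℕ} (T : Set (Projectivization ℝ (Fin n → ℝ))) :
    Submodule.span ℂ (nuC d '' (toC '' T)) =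
      Submodule.span ℂ (map (algebraMap ℝ ℂ) '' (nuR d '' T)) := by
  rw [Set.image_image, Set.image_image]
  exact Submodule.span_image_eq_of_forall_eq_units_smul exists_nuC_toC_eq_units_smul T

theorem union_of_evincing_sets_dependent_general {m d : ℕ}
    (P : MvPolynomial (Fin (m + 1)) ℝ)
    (hne : cRank d (MvPolynomial.map (algebraMap ℝ ℂ) P) ≠ rRank d P)
    (SC : Finset (Projectivization ℂ (Fin (m + 1) → ℂ)))
    (SR : Finset (Projectivization ℝ (Fin (m + 1) → ℝ)))
    (hSC : MvPolynomial.map (algebraMap ℝ ℂ) P ∈ Submodule.span ℂ (nuC d '' (SC : Set _)))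
    (hSCcard : SC.card = cRank d (MvPolynomial.map (algebraMap ℝ ℂ) P))
    (hSR : P ∈ Submodule.span ℝ (nuR d '' (SR : Set _)))
    (hSRcard : SR.card = rRank d P) :
    ¬ LinearIndependent ℂ
      (fun p : ↥((SC : Set (Projectivization ℂ (Fin (m + 1) → ℂ))) ∪ toC '' (SR : Set _)) =>
        nuC d p.1) := by
  classical
  intro hli
  set I := SR.filter (toC · ∈ SC)
  have hinter : (SC : Set _) ∩ toC '' (SR : Set _) =
      toC '' (I : Set (Projectivization ℝ (Fin (m + 1) → ℝ))) := by
    ext p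
    simp only [I, Finset.coe_filter]
    aesop
  have hmemR : map (algebraMap ℝ ℂ) P ∈ Submodule.span ℂ (nuC d '' (toC '' SR)) := by
    rw [span_nuC_image_toC]
    exact map_mem_span_image_map _ hSR
  have hmemI := hinter ▸ LinearIndepOn.mem_span_image_inter hli hSC hmemR
  have hC : cRank d (map (algebraMap ℝ ℂ) P) ≤ I.card := by
    rw [← Finset.card_image_of_injective I toC_injective]
    exact cRank_le_card_of_mem_span_s17 (by rwa [Finset.coe_image])
  have hR : rRank d P ≤ I.card := by
    rw [span_nuC_image_toC] at hmemI
    exact rRank_le_card_of_mem_span_s17 (mem_span_of_map_mem_span_image_map hmemI)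
  have hIR : I.card ≤ SR.card := Finset.card_filter_le _ _
  have hIC : I.card ≤ SC.card := Finset.card_le_card_of_injOn toC
    (fun q hq => (Finset.mem_filter.mp hq).2) toC_injective.injOn
  omega

/-- If `P` is a real homogeneous polynomial of degree `d` with
`r_ℂ(P) + r_ℝ(P) ≤ 3d - 1` and `r_ℂ(P) ≠ r_ℝ(P)`, and `S_ℂ ⊂ ℙ^m(ℂ)`, `S_ℝ ⊂ ℙ^m(ℝ)`
evince `r_ℂ(P)` and `r_ℝ(P)` respectively, then the Veronese images of the points of
`S_ℂ ∪ S_ℝ` are linearly dependent, i.e. `h¹(𝓘_{S_ℂ ∪ S_ℝ}(d)) > 0`. -/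
theorem union_of_evincing_sets_dependent {m d : ℕ}
    (P : MvPolynomial (Fin (m + 1)) ℝ) (hP : P.IsHomogeneous d)
    (hsum : cRank d (MvPolynomial.map (algebraMap ℝ ℂ) P) + rRank d P ≤ 3 * d - 1)
    (hne : cRank d (MvPolynomial.map (algebraMap ℝ ℂ) P) ≠ rRank d P)
    (SC : Finset (Projectivization ℂ (Fin (m + 1) → ℂ)))
    (SR : Finset (Projectivization ℝ (Fin (m + 1) → ℝ)))
    (hSC : MvPolynomial.map (algebraMap ℝ ℂ) P ∈ Submodule.span ℂ (nuC d '' (SC : Set _)))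
    (hSCcard : SC.card = cRank d (MvPolynomial.map (algebraMap ℝ ℂ) P))
    (hSR : P ∈ Submodule.span ℝ (nuR d '' (SR : Set _)))
    (hSRcard : SR.card = rRank d P) :
    ¬ LinearIndependent ℂ
      (fun p : ↥((SC : Set (Projectivization ℂ (Fin (m + 1) → ℂ))) ∪ toC '' (SR : Set _)) =>
        nuC d p.1) :=
  union_of_evincing_sets_dependent_general P hne SC SR hSC hSCcard hSR hSRcard
end
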